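/- Let α ∈ (0, π/2) and s, t ∈ (0,1). If (1+t²)/(1-t²) + (cos α / sin α) · ((1-s²)/(2s)) · (2t/(1-t²)) = 1/sin α, then t = (cos α / (1 + sin α)) · s. -/

import Mathlib

/-
Clearing denominators, the relation becomes `S s (1 + t²) + c t (1 - s²) = s (1 - t²)` with
`S = sin α`, `c = cos α`. Using `c² = 1 - S²`, `c` times this is the factorisation
`((1 + S) t - c s) (c s t + 1 - S) = 0`, and the second factor is positive for `0 < α < π/2`.
-/

lemma mul_factor_eq_zero_of_relation {S c s t : ℝ} (hSc : S ^ 2 + c ^ 2 = 1)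
    (hS : S ≠ 0) (hs : s ≠ 0) (ht : 1 - t ^ 2 ≠ 0)
    (heq : (1 + t ^ 2) / (1 - t ^ 2) + (c / S) * ((1 - s ^ 2) / (2 * s)) * (2 * t / (1 - t ^ 2))
        = 1 / S) :
    ((1 + S) * t - c * s) * (c * s * t + (1 - S)) = 0 := by
  have cleared : S * s * (1 + t ^ 2) + c * t * (1 - s ^ 2) = s * (1 - t ^ 2) := by
    field_simp at heq
    linear_combination heq
  linear_combination c * cleared - t * hSc

lemma eq_div_mul_of_mul_factor_eq_zero {S c s t : ℝ} (hc : 0 < c) (hS : S < 1)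
    (hs : 0 < s) (ht : 0 < t) (h : ((1 + S) * t - c * s) * (c * s * t + (1 - S)) = 0) :
    t = c / (1 + S) * s := by
  have hpos : 0 < c * s * t + (1 - S) := by
    have : 0 < c * s * t := by positivity
    linarith
  have hlin := (mul_eq_zero.mp h).resolve_right hpos.ne'
  have hS1 : 1 + S ≠ 0 := by nlinarith [mul_pos (mul_pos hc hs) ht]
  field_simp
  linarith

theorem stmt1_general (α s t : ℝ) (hα0 : 0 < α) (hα : α < Real.pi / 2)
    (hs0 : 0 < s) (ht0 : 0 < t) (ht1 : t < 1)
    (heq : (1 + t ^ 2) / (1 - t ^ 2)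
        + (Real.cos α / Real.sin α) * ((1 - s ^ 2) / (2 * s)) * (2 * t / (1 - t ^ 2))
        = 1 / Real.sin α) :
    t = (Real.cos α / (1 + Real.sin α)) * s := by
  have hsin : 0 < Real.sin α := Real.sin_pos_of_pos_of_lt_pi hα0 (by linarith [Real.pi_pos])
  have hcos : 0 < Real.cos α := Real.cos_pos_of_mem_Ioo ⟨by linarith [Real.pi_pos], hα⟩
  have hsin1 : Real.sin α < 1 := by nlinarith [Real.sin_sq_add_cos_sq α]
  have ht2 : 1 - t ^ 2 ≠ 0 := by nlinarith
  exact eq_div_mul_of_mul_factor_eq_zero hcos hsin1 hs0 ht0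
    (mul_factor_eq_zero_of_relation (Real.sin_sq_add_cos_sq α) hsin.ne' hs0.ne' ht2 heq)

theorem stmt1 (α s t : ℝ) (hα0 : 0 < α) (hα : α < Real.pi / 2)
    (hs0 : 0 < s) (hs1 : s < 1) (ht0 : 0 < t) (ht1 : t < 1)
    (heq : (1 + t ^ 2) / (1 - t ^ 2)
        + (Real.cos α / Real.sin α) * ((1 - s ^ 2) / (2 * s)) * (2 * t / (1 - t ^ 2))
        = 1 / Real.sin α) :
    t = (Real.cos α / (1 + Real.sin α)) * s :=
  stmt1_general α s t hα0 hα hs0 ht0 ht1 heq
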